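/- arXiv:2603.10054 — 2 statements merged into one kernel-verified Lean document; each statement's English description precedes it below -/
import Mathlib

section
/- Let n ≥ 2 be an integer and let a, b be real numbers. On the open cube (0,1)^n define the weight w(ρ) = ∏_{i=1}^n (ρ_i(1−ρ_i))^{(2^{n−1}−1)/2} and the function R(ρ) = a − b ∑_{i=1}^n 1/(ρ_i(1−ρ_i)). Then both ∫_{(0,1)^n} R·w and ∫_{(0,1)^n} w are finite, ∫ w > 0, and the weighted average satisfies ∫_{(0,1)^n} R·w / ∫_{(0,1)^n} w = a − b·n·2^{n+1}/(2^{n−1} − 1). -/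
/-!
Write `R · w = a · w - b · ∑ᵢ (ρᵢ (1 - ρᵢ))⁻¹ · w`; on the cube the `i`-th summand is again a
product over the coordinates, with the `i`-th exponent lowered from `α` to `α - 1`. By Fubini
every integral is then a product of the Beta integrals `∫₀¹ (x (1 - x))^β = B(β + 1, β + 1)`, so
`∫ w = B(α + 1, α + 1)^n` and `∫ R w = (a - b n B(α, α) / B(α + 1, α + 1)) ∫ w`. The recurrence of
the Gamma function gives `B(α, α) / B(α + 1, α + 1) = 2 (2α + 1) / α`, which equals
`2^(n+1) / (2^(n-1) - 1)` when `2α + 1 = 2^(n-1)`.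
-/

open MeasureTheory Set ProbabilityTheory

theorem ProbabilityTheory.beta_add_one_add_one {a b : ℝ} (ha : 0 < a) (hb : 0 < b) :
    beta (a + 1) (b + 1) = a * b / ((a + b + 1) * (a + b)) * beta a b := by
  have hab : a + 1 + (b + 1) = a + b + 1 + 1 := by ring
  have hΓ : Real.Gamma (a + b) ≠ 0 := (Real.Gamma_pos_of_pos (add_pos ha hb)).ne'
  simp only [beta, hab, Real.Gamma_add_one ha.ne', Real.Gamma_add_one hb.ne',
    Real.Gamma_add_one (by positivity : a + b + 1 ≠ 0),
    Real.Gamma_add_one (by positivity : a + b ≠ 0)]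
  field_simp

theorem eqOn_ofReal_rpow_mul_one_sub_rpow (a b : ℝ) :
    EqOn (fun x : ℝ => ((x ^ (a - 1) * (1 - x) ^ (b - 1) : ℝ) : ℂ))
      (fun x : ℝ => (x : ℂ) ^ ((a : ℂ) - 1) * (1 - (x : ℂ)) ^ ((b : ℂ) - 1)) (Ioo 0 1) := by
  intro x hx
  have h1 : (0 : ℝ) ≤ 1 - x := by linarith [hx.2]
  push_cast [Complex.ofReal_cpow hx.1.le, Complex.ofReal_cpow h1]
  rfl

theorem integrableOn_rpow_mul_one_sub_rpow {a b : ℝ} (ha : 0 < a) (hb : 0 < b) :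
    IntegrableOn (fun x : ℝ => x ^ (a - 1) * (1 - x) ^ (b - 1)) (Ioo 0 1) := by
  have hC := Complex.betaIntegral_convergent (u := a) (v := b) (by simpa) (by simpa)
  rw [intervalIntegrable_iff_integrableOn_Ioo_of_le zero_le_one] at hC
  simpa [IntegrableOn] using
    (hC.congr_fun (eqOn_ofReal_rpow_mul_one_sub_rpow a b).symm measurableSet_Ioo).re

theorem integral_rpow_mul_one_sub_rpow {a b : ℝ} (ha : 0 < a) (hb : 0 < b) :
    ∫ x in Ioo (0 : ℝ) 1, x ^ (a - 1) * (1 - x) ^ (b - 1) = beta a b := by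
  apply Complex.ofReal_injective
  rw [← integral_complex_ofReal, setIntegral_congr_fun measurableSet_Ioo
    (eqOn_ofReal_rpow_mul_one_sub_rpow a b), ← integral_Ioc_eq_integral_Ioo,
    ← intervalIntegral.integral_of_le zero_le_one]
  change Complex.betaIntegral a b = _
  rw [Complex.betaIntegral_eq_Gamma_mul_div _ _ (by simpa) (by simpa), ← Complex.ofReal_add]
  simp only [beta, Complex.Gamma_ofReal, Complex.ofReal_mul, Complex.ofReal_div]

theorem eqOn_mul_one_sub_rpow (β : ℝ) :
    EqOn (fun x : ℝ => (x * (1 - x)) ^ β)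
      (fun x : ℝ => x ^ (β + 1 - 1) * (1 - x) ^ (β + 1 - 1)) (Ioo 0 1) := fun x hx => by
  simp only [add_sub_cancel_right]
  exact Real.mul_rpow hx.1.le (sub_nonneg.2 hx.2.le)

theorem integrableOn_mul_one_sub_rpow {β : ℝ} (hβ : -1 < β) :
    IntegrableOn (fun x : ℝ => (x * (1 - x)) ^ β) (Ioo 0 1) :=
  (integrableOn_rpow_mul_one_sub_rpow (by linarith) (by linarith)).congr_fun
    (eqOn_mul_one_sub_rpow β).symm measurableSet_Ioo

theorem integral_mul_one_sub_rpow {β : ℝ} (hβ : -1 < β) :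
    ∫ x in Ioo (0 : ℝ) 1, (x * (1 - x)) ^ β = beta (β + 1) (β + 1) := by
  rw [setIntegral_congr_fun measurableSet_Ioo (eqOn_mul_one_sub_rpow β),
    integral_rpow_mul_one_sub_rpow (by linarith) (by linarith)]

theorem integral_mul_one_sub_rpow_pos {β : ℝ} (hβ : -1 < β) :
    0 < ∫ x in Ioo (0 : ℝ) 1, (x * (1 - x)) ^ β := by
  rw [integral_mul_one_sub_rpow hβ]
  exact beta_pos (by linarith) (by linarith)

theorem integral_mul_one_sub_rpow_sub_one {α : ℝ} (hα : 0 < α) :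
    ∫ x in Ioo (0 : ℝ) 1, (x * (1 - x)) ^ (α - 1) =
      2 * (2 * α + 1) / α * ∫ x in Ioo (0 : ℝ) 1, (x * (1 - x)) ^ α := by
  rw [integral_mul_one_sub_rpow (by linarith), integral_mul_one_sub_rpow (by linarith),
    sub_add_cancel, beta_add_one_add_one hα hα]
  field_simp
  ring

section Pi

variable {ι 𝕜 : Type*} [Fintype ι] [RCLike 𝕜] {E : ι → Type*} [∀ i, MeasureSpace (E i)]
  [∀ i, SigmaFinite (volume : Measure (E i))] {s : ∀ i, Set (E i)} {f : ∀ i, E i → 𝕜}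

theorem integrableOn_pi_prod (hf : ∀ i, IntegrableOn (f i) (s i)) :
    IntegrableOn (fun x : ∀ i, E i => ∏ i, f i (x i)) (univ.pi s) := by
  rw [IntegrableOn, volume_pi, Measure.restrict_pi_pi]
  exact Integrable.fintype_prod_dep hf

theorem setIntegral_pi_prod (f : ∀ i, E i → 𝕜) :
    ∫ x in univ.pi s, ∏ i, f i (x i) = ∏ i, ∫ y in s i, f i y := by
  rw [volume_pi, Measure.restrict_pi_pi, integral_fintype_prod_eq_prod]

end Pi

section Cube

variable {ι : Type*} [Fintype ι]

theorem sum_one_div_mul_prod_rpow [DecidableEq ι] {u : ι → ℝ} (hu : ∀ i, 0 < u i) (α : ℝ) :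
    (∑ i, 1 / u i) * ∏ j, u j ^ α = ∑ i, ∏ j, u j ^ (if j = i then α - 1 else α) := by
  rw [Finset.sum_mul]
  refine Finset.sum_congr rfl fun i _ => ?_
  have h (j : ι) :
      u j ^ (if j = i then α - 1 else α) = u j ^ α * if j = i then (u j)⁻¹ else 1 := by
    split_ifs <;> simp [Real.rpow_sub_one (hu j).ne', div_eq_mul_inv]
  simp only [h, Finset.prod_mul_distrib, Finset.prod_ite_eq', Finset.mem_univ, if_true]
  ring

theorem eqOn_sum_one_div_mul_prod_rpow [DecidableEq ι] (α : ℝ) :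
    EqOn (fun ρ : ι → ℝ => (∑ i, 1 / (ρ i * (1 - ρ i))) * ∏ i, (ρ i * (1 - ρ i)) ^ α)
      (fun ρ => ∑ i, ∏ j, (ρ j * (1 - ρ j)) ^ (if j = i then α - 1 else α))
      (univ.pi fun _ => Ioo 0 1) := fun _ hρ =>
  sum_one_div_mul_prod_rpow (fun i => mul_pos (hρ i trivial).1 (sub_pos.2 (hρ i trivial).2)) α

theorem integrableOn_prod_mul_one_sub_rpow_ite [DecidableEq ι] {α : ℝ} (hα : 0 < α) (i : ι) :
    IntegrableOn (fun ρ : ι → ℝ => ∏ j, (ρ j * (1 - ρ j)) ^ (if j = i then α - 1 else α))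
      (univ.pi fun _ => Ioo 0 1) :=
  integrableOn_pi_prod fun j => integrableOn_mul_one_sub_rpow (by split_ifs <;> linarith)

theorem integrableOn_sum_one_div_mul_prod_rpow {α : ℝ} (hα : 0 < α) :
    IntegrableOn (fun ρ : ι → ℝ => (∑ i, 1 / (ρ i * (1 - ρ i))) * ∏ i, (ρ i * (1 - ρ i)) ^ α)
      (univ.pi fun _ => Ioo 0 1) := by
  classical
  exact IntegrableOn.congr_fun
    (integrable_finsetSum _ fun i _ => integrableOn_prod_mul_one_sub_rpow_ite hα i)
    (eqOn_sum_one_div_mul_prod_rpow α).symm (MeasurableSet.univ_pi fun _ => measurableSet_Ioo)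

theorem setIntegral_sum_one_div_mul_prod_rpow {α : ℝ} (hα : 0 < α) :
    ∫ ρ in univ.pi fun _ : ι => Ioo (0 : ℝ) 1,
        (∑ i, 1 / (ρ i * (1 - ρ i))) * ∏ i, (ρ i * (1 - ρ i)) ^ α =
      Fintype.card ι * (2 * (2 * α + 1) / α) *
        (∫ x in Ioo (0 : ℝ) 1, (x * (1 - x)) ^ α) ^ Fintype.card ι := by
  classical
  set B := ∫ x in Ioo (0 : ℝ) 1, (x * (1 - x)) ^ α
  have hfactor (i j : ι) : ∫ x in Ioo (0 : ℝ) 1, (x * (1 - x)) ^ (if j = i then α - 1 else α) =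
      (if j = i then 2 * (2 * α + 1) / α else 1) * B := by
    split_ifs
    · exact integral_mul_one_sub_rpow_sub_one hα
    · exact (one_mul B).symm
  rw [setIntegral_congr_fun (MeasurableSet.univ_pi fun _ => measurableSet_Ioo)
      (eqOn_sum_one_div_mul_prod_rpow α),
    integral_finsetSum _ fun i _ => integrableOn_prod_mul_one_sub_rpow_ite hα i,
    Finset.sum_congr rfl fun i _ =>
      setIntegral_pi_prod fun j x => (x * (1 - x)) ^ (if j = i then α - 1 else α)]
  simp only [hfactor, Finset.prod_mul_distrib, Finset.prod_ite_eq',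
    Finset.mem_univ, if_true, Finset.prod_const, Finset.card_univ, Finset.sum_const, nsmul_eq_mul]
  ring

end Cube

/-- Volume-averaged Ricci scalar of the collapsing star bitnet `C̃ (n+1)`:
with weight `w ρ = ∏ i (ρ i (1 - ρ i))^((2^(n-1)-1)/2)` and
`R ρ = a - b ∑ i 1/(ρ i (1 - ρ i))` on `(0,1)^n`, both `R·w` and `w` are
integrable, `∫ w > 0`, and `⟨R⟩ = a - b·n·2^(n+1)/(2^(n-1)-1)`. -/
theorem collapsing_star_average_ricci (n : ℕ) (hn : 2 ≤ n) (a b : ℝ) :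
    let α : ℝ := ((2 : ℝ) ^ (n - 1) - 1) / 2
    let w : (Fin n → ℝ) → ℝ := fun ρ => ∏ i, (ρ i * (1 - ρ i)) ^ α
    let R : (Fin n → ℝ) → ℝ := fun ρ => a - b * ∑ i, 1 / (ρ i * (1 - ρ i))
    let S : Set (Fin n → ℝ) := Set.univ.pi fun _ => Set.Ioo (0 : ℝ) 1
    IntegrableOn (fun ρ => R ρ * w ρ) S volume ∧
    IntegrableOn w S volume ∧
    0 < ∫ ρ in S, w ρ ∧
    (∫ ρ in S, R ρ * w ρ) / (∫ ρ in S, w ρ) =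
      a - b * n * (2 : ℝ) ^ (n + 1) / ((2 : ℝ) ^ (n - 1) - 1) := by
  intro α w R S
  have h2 : (2 : ℝ) ≤ 2 ^ (n - 1) := le_self_pow₀ one_le_two (by omega)
  have hα : 0 < α := by simp only [α]; linarith
  have hw : IntegrableOn w S :=
    integrableOn_pi_prod fun _ => integrableOn_mul_one_sub_rpow (by linarith)
  have hsum := integrableOn_sum_one_div_mul_prod_rpow (ι := Fin n) hα
  have hRw : (fun ρ => R ρ * w ρ) =
      fun ρ => a * w ρ - b * ((∑ i, 1 / (ρ i * (1 - ρ i))) * w ρ) := by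
    funext ρ
    ring
  set B := ∫ x in Ioo (0 : ℝ) 1, (x * (1 - x)) ^ α
  have hB : 0 < B := integral_mul_one_sub_rpow_pos (by linarith)
  have hw_val : ∫ ρ in S, w ρ = B ^ n :=
    (setIntegral_pi_prod fun _ x => (x * (1 - x)) ^ α).trans (by simp [B])
  refine ⟨hRw ▸ (hw.const_mul a).sub (hsum.const_mul b), hw, hw_val ▸ pow_pos hB n, ?_⟩
  rw [hRw, integral_sub (hw.const_mul a) (hsum.const_mul b), integral_const_mul,
    integral_const_mul, hw_val, setIntegral_sum_one_div_mul_prod_rpow hα, Fintype.card_fin]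
  have h4 : (2 : ℝ) ^ (n + 1) = 4 * 2 ^ (n - 1) := by
    rw [show n + 1 = n - 1 + 2 by omega, pow_add]
    ring
  have hc1 : (2 : ℝ) ^ (n - 1) - 1 ≠ 0 := by linarith
  rw [h4]
  field_simp
  ring
end

section
/- Define φ : ℝ³ → (0,∞) × ℝ × (0,∞) by φ(x, z, a) = (e^{x+z}, a, e^{x−z}), and for (v₁, a, v₂) ∈ (0,∞) × ℝ × (0,∞) let G(v₁, a, v₂) = diag(1/(2v₁²), v₁/v₂, 1/(2v₂²)) be the Fisher metric matrix of the two-node Gaussian chain in coordinates (v₁, a, v₂). Then for every (x, z, a) ∈ ℝ³, the pullback matrix J(x,z,a)ᵀ · G(φ(x,z,a)) · J(x,z,a), where J is the Jacobian matrix of φ at (x,z,a) (with column order (x, z, a)), equals diag(1, 1, e^{2z}). Hence the two-node Gaussian chain with its Fisher metric is isometric to the Riemannian product ℝ × H², where H² is the upper half-plane model {(z,a)} with metric dz² + e^{2z} da². -/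
/-! In the coordinates `v₁ = e^{x+z}`, `v₂ = e^{x-z}` one has `dvᵢ/vᵢ = dx ± dz`, so the two
variance terms `dvᵢ²/(2vᵢ²)` add up to `dx² + dz²` (the cross terms cancel), while the
coefficient `v₁/v₂` of `da²` becomes `e^{2z}`. -/

open Real Matrix

noncomputable def gaussianChainChart (p : Fin 3 → ℝ) : Fin 3 → ℝ :=
  ![exp (p 0 + p 1), p 2, exp (p 0 - p 1)]

theorem fderiv_gaussianChainChart_apply (p v : Fin 3 → ℝ) :
    fderiv ℝ gaussianChainChart p v =
      ![exp (p 0 + p 1) * (v 0 + v 1), v 2, exp (p 0 - p 1) * (v 0 - v 1)] := by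
  let pr (j : Fin 3) : (Fin 3 → ℝ) →L[ℝ] ℝ := ContinuousLinearMap.proj j
  have hderiv : HasFDerivAt gaussianChainChart (ContinuousLinearMap.pi
      ![exp (p 0 + p 1) • (pr 0 + pr 1), pr 2, exp (p 0 - p 1) • (pr 0 - pr 1)]) p := by
    refine hasFDerivAt_pi.2 fun i => ?_
    fin_cases i
    · exact ((pr 0).hasFDerivAt.add (pr 1).hasFDerivAt).exp
    · exact (pr 2).hasFDerivAt
    · exact ((pr 0).hasFDerivAt.sub (pr 1).hasFDerivAt).exp
  rw [hderiv.fderiv]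
  ext i
  fin_cases i <;> simp [pr, mul_add, mul_sub]

theorem jacobian_gaussianChainChart (p : Fin 3 → ℝ) :
    Matrix.of (fun i j => fderiv ℝ gaussianChainChart p (Pi.single j 1) i) =
      !![exp (p 0 + p 1), exp (p 0 + p 1), 0; 0, 0, 1; exp (p 0 - p 1), -exp (p 0 - p 1), 0] := by
  ext i j
  fin_cases i <;> fin_cases j <;> simp [fderiv_gaussianChainChart_apply]

theorem transpose_mul_diagonal_mul_chainJacobian {u w : ℝ} (hu : u ≠ 0) (hw : w ≠ 0) :
    (!![u, u, 0; 0, 0, 1; w, -w, 0])ᵀ * diagonal ![1 / (2 * u ^ 2), u / w, 1 / (2 * w ^ 2)] *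
        !![u, u, 0; 0, 0, 1; w, -w, 0] = diagonal ![1, 1, u / w] := by
  ext i j
  fin_cases i <;> fin_cases j <;> simp [Matrix.mul_apply, Fin.sum_univ_succ] <;> field_simp <;> ring

/-- Under the coordinate change `φ(x,z,a) = (e^{x+z}, a, e^{x-z})`, the Fisher metric
`diag(1/(2v₁²), v₁/v₂, 1/(2v₂²))` of the two-node Gaussian chain pulls back to
`diag(1, 1, e^{2z})`: the chain is isometric to the Riemannian product `ℝ × H²`. -/
theorem gaussian_chain_product_decomposition :
    let φ : (Fin 3 → ℝ) → (Fin 3 → ℝ) := fun p =>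
      ![Real.exp (p 0 + p 1), p 2, Real.exp (p 0 - p 1)]
    let G : (Fin 3 → ℝ) → Matrix (Fin 3) (Fin 3) ℝ := fun q =>
      Matrix.diagonal ![1 / (2 * (q 0) ^ 2), q 0 / q 2, 1 / (2 * (q 2) ^ 2)]
    let J : (Fin 3 → ℝ) → Matrix (Fin 3) (Fin 3) ℝ := fun p =>
      Matrix.of fun i j => fderiv ℝ φ p (Pi.single j 1) i
    ∀ p : Fin 3 → ℝ,
      (J p)ᵀ * G (φ p) * J p = Matrix.diagonal ![1, 1, Real.exp (2 * p 1)] := by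
  intro φ G J p
  have hJ : J p = _ := jacobian_gaussianChainChart p
  have hratio : exp (p 0 + p 1) / exp (p 0 - p 1) = exp (2 * p 1) := by
    rw [← exp_sub]
    ring_nf
  rw [hJ, ← hratio, ← transpose_mul_diagonal_mul_chainJacobian (exp_pos _).ne' (exp_pos _).ne']
  rfl
end
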